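/- arXiv:1709.03840 — 4 statements merged into one kernel-verified Lean document; each statement's English description precedes it below -/
import Mathlib

section
/- For any unit-norm spin-1 state Ψ ∈ ℂ³ with spin vector F = (F_x, F_y, F_z) where F_α = Ψ* f_α Ψ, the vector e = (1/|F|)·(−F_−/√2, F_z, F_+/√2)ᵀ, where F_± = F_x ± iF_y, satisfies S e = 0 for the matrix S = F_x f_x + F_y f_y + F_z f_z, provided |F| ≠ 0; moreover e is a unit vector. -/
open Matrix Complex

noncomputable section

/-- The spin-1 matrix `f_x`. -/
def fx : Matrix (Fin 3) (Fin 3) ℂ :=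
  ((1 / Real.sqrt 2 : ℝ) : ℂ) • !![0, 1, 0; 1, 0, 1; 0, 1, 0]

/-- The spin-1 matrix `f_y`. -/
def fy : Matrix (Fin 3) (Fin 3) ℂ :=
  (Complex.I / (Real.sqrt 2 : ℝ)) • !![0, -1, 0; 1, 0, -1; 0, 1, 0]

/-- The spin-1 matrix `f_z`. -/
def fz : Matrix (Fin 3) (Fin 3) ℂ := !![1, 0, 0; 0, 0, 0; 0, 0, -1]

/-- Spin-vector component `F_α = Ψ* f_α Ψ`. -/
def Fcomp (f : Matrix (Fin 3) (Fin 3) ℂ) (Ψ : Fin 3 → ℂ) : ℂ :=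
  dotProduct (star Ψ) (f.mulVec Ψ)

/-- For a unit-norm spin-1 state `Ψ` with spin vector `F = (F_x,F_y,F_z)` and
`S = F_x f_x + F_y f_y + F_z f_z`, provided `|F| ≠ 0`, the vector
`e = (1/|F|)·(−F₋/√2, F_z, F₊/√2)` satisfies `S e = 0` and is a unit vector. -/
theorem spin1_kernel_eigenvector (Ψ : Fin 3 → ℂ)
    (hΨ : ∑ i, ‖Ψ i‖ ^ 2 = 1)
    (Fx Fy Fz : ℂ) (hFx : Fx = Fcomp fx Ψ) (hFy : Fy = Fcomp fy Ψ)
    (hFz : Fz = Fcomp fz Ψ)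
    (nF : ℝ) (hnF : nF = Real.sqrt (‖Fx‖ ^ 2 + ‖Fy‖ ^ 2 + ‖Fz‖ ^ 2))
    (hne : nF ≠ 0)
    (S : Matrix (Fin 3) (Fin 3) ℂ) (hS : S = Fx • fx + Fy • fy + Fz • fz)
    (e : Fin 3 → ℂ)
    (he : e = (1 / (nF : ℂ)) •
      ![-(Fx - Complex.I * Fy) / (Real.sqrt 2 : ℂ), Fz,
        (Fx + Complex.I * Fy) / (Real.sqrt 2 : ℂ)]) :
    S.mulVec e = 0 ∧ ∑ i, ‖e i‖ ^ 2 = 1 := by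
  have hs2 : (Real.sqrt 2 : ℝ) ^ 2 = 2 := Real.sq_sqrt (by norm_num)
  subst hS he
  constructor
  · funext i
    fin_cases i <;>
      · simp only [Matrix.mulVec, dotProduct, fx, fy, fz, Fin.sum_univ_three,
          Matrix.add_apply, Matrix.smul_apply, Pi.smul_apply, smul_eq_mul,
          Matrix.cons_val', Matrix.cons_val_zero, Matrix.cons_val_one, Matrix.head_cons,
          Matrix.empty_val', Matrix.cons_val_fin_one, Matrix.head_fin_const,
          Pi.zero_apply, Matrix.cons_val_two, Matrix.tail_cons,
          Fin.zero_eta, Fin.mk_one, Fin.reduceFinMk, Fin.isValue, Matrix.of_apply, Complex.ofReal_inv]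
        push_cast
        ring
  · have hnF2 : nF ^ 2 = ‖Fx‖ ^ 2 + ‖Fy‖ ^ 2 + ‖Fz‖ ^ 2 := by
      rw [hnF]; exact Real.sq_sqrt (by positivity)
    have key : ‖Fx - Complex.I * Fy‖ ^ 2 + ‖Fx + Complex.I * Fy‖ ^ 2
        = 2 * ‖Fx‖ ^ 2 + 2 * ‖Fy‖ ^ 2 := by
      simp only [Complex.sq_norm, Complex.normSq_apply, Complex.sub_re, Complex.sub_im, Complex.add_re,
        Complex.add_im, Complex.mul_re, Complex.mul_im, Complex.I_re, Complex.I_im]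
      ring
    rw [Fin.sum_univ_three]
    simp only [Pi.smul_apply, Matrix.cons_val_zero, Matrix.cons_val_one, Matrix.head_cons,
      Matrix.cons_val_two, Matrix.tail_cons, smul_eq_mul, norm_mul, norm_div,
      Complex.norm_real, norm_neg, one_div, norm_inv]
    field_simp
    simp only [mul_pow, Real.norm_eq_abs, _root_.sq_abs, hs2]
    nlinarith [key, hnF2, sq_nonneg nF, sq_nonneg (nF^2), sq_nonneg (‖Fz‖)]
end
end

section
/- For a fixed Ψ ∈ ℂ³ with spin vector F computed from Ψ, and S = F_x f_x + F_y f_y + F_z f_z with |F| ≠ 0, the vector Ψ satisfies S²Ψ = |F|²Ψ, and consequently exp(−i β₁ t S)Ψ = cos(β₁ t |F|)Ψ − i (sin(β₁ t |F|)/|F|) S Ψ for all real t and β₁. -/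
open Matrix Complex

noncomputable section

/-- If `v` is an eigenvector of `A` with eigenvalue `μ`, then it is an
eigenvector of `exp A` with eigenvalue `exp μ`. -/
lemma exp_mulVec_eig (A : Matrix (Fin 3) (Fin 3) ℂ) (v : Fin 3 → ℂ) (μ : ℂ)
    (h : A.mulVec v = μ • v) :
    (NormedSpace.exp A).mulVec v = Complex.exp μ • v := by
  letI : SeminormedRing (Matrix (Fin 3) (Fin 3) ℂ) := Matrix.linftyOpSemiNormedRing
  letI : NormedRing (Matrix (Fin 3) (Fin 3) ℂ) := Matrix.linftyOpNormedRing
  letI : NormedAlgebra ℂ (Matrix (Fin 3) (Fin 3) ℂ) := Matrix.linftyOpNormedAlgebra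
  have hpow : ∀ k : ℕ, (A ^ k).mulVec v = μ ^ k • v := by
    intro k
    induction k with
    | zero => simp [Matrix.one_mulVec]
    | succ k ih =>
      rw [pow_succ, ← Matrix.mulVec_mulVec, h, Matrix.mulVec_smul, ih, smul_smul, pow_succ,
        mul_comm]
  let L : Matrix (Fin 3) (Fin 3) ℂ →ₗ[ℂ] (Fin 3 → ℂ) :=
    { toFun := fun M => M.mulVec v
      map_add' := fun M N => Matrix.add_mulVec M N v
      map_smul' := fun c M => Matrix.smul_mulVec c M v }
  have hL : Continuous L := L.continuous_of_finiteDimensional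
  have hsum : Summable fun k : ℕ => ((k.factorial : ℂ))⁻¹ • A ^ k :=
    NormedSpace.expSeries_summable' (𝕂 := ℂ) A
  have h1 : HasSum (fun k : ℕ => L (((k.factorial : ℂ))⁻¹ • A ^ k)) (L (NormedSpace.exp A)) := by
    rw [NormedSpace.exp_eq_tsum (𝕂 := ℂ)]
    exact (hsum.hasSum.map L.toAddMonoidHom hL)
  have h2 : HasSum (fun k : ℕ => L (((k.factorial : ℂ))⁻¹ • A ^ k)) (Complex.exp μ • v) := by
    have hsC : HasSum (fun k : ℕ => ((k.factorial : ℂ))⁻¹ • μ ^ k) (NormedSpace.exp μ) :=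
      NormedSpace.exp_series_hasSum_exp' μ
    have := hsC.smul_const v
    rw [Complex.exp_eq_exp_ℂ]
    convert this using 2 with k
    calc L ((k.factorial : ℂ)⁻¹ • A ^ k) = (k.factorial : ℂ)⁻¹ • L (A ^ k) :=
          _root_.map_smul L _ _
      _ = (k.factorial : ℂ)⁻¹ • (μ ^ k • v) := by
          rw [show L (A ^ k) = (A ^ k).mulVec v from rfl, hpow]
      _ = ((k.factorial : ℂ)⁻¹ • μ ^ k) • v := by rw [smul_smul, smul_eq_mul]
  exact h1.unique h2

set_option maxHeartbeats 2000000 in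
/-- The key algebraic identity `S (S Ψ) = (|Fx|² + |Fy|² + |Fz|²) Ψ`. -/
lemma spin1_key (Ψ : Fin 3 → ℂ)
    (Fx Fy Fz : ℂ) (hFx : Fx = Fcomp fx Ψ) (hFy : Fy = Fcomp fy Ψ)
    (hFz : Fz = Fcomp fz Ψ)
    (S : Matrix (Fin 3) (Fin 3) ℂ) (hS : S = Fx • fx + Fy • fy + Fz • fz) :
    S.mulVec (S.mulVec Ψ) =
      (Fx * (starRingEnd ℂ) Fx + Fy * (starRingEnd ℂ) Fy + Fz * (starRingEnd ℂ) Fz) • Ψ := by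
  have hu : ((Real.sqrt 2 : ℝ) : ℂ) * ((Real.sqrt 2 : ℝ) : ℂ) = 2 := by
    rw [← Complex.ofReal_mul, Real.mul_self_sqrt] <;> norm_num
  subst hS hFx hFy hFz
  funext i
  fin_cases i <;>
  · simp [Fcomp, fx, fy, fz, Matrix.mulVec, dotProduct, Fin.sum_univ_three,
      Matrix.smul_apply, Matrix.add_apply, Pi.smul_apply, Pi.star_apply, RCLike.star_def,
      map_add, _root_.map_mul, map_sub, map_neg, Complex.conj_conj, Complex.conj_I,
      div_eq_mul_inv, Matrix.vecHead, Matrix.vecTail]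
    have h2 : ((Real.sqrt 2 : ℝ) : ℂ)⁻¹ ^ 2 = 2⁻¹ := by
      rw [sq, ← mul_inv]; rw [hu]
    have h4 : ((Real.sqrt 2 : ℝ) : ℂ)⁻¹ ^ 4 = 4⁻¹ := by
      have : (4:ℕ) = 2*2 := rfl
      rw [this, pow_mul, h2]; norm_num
    have hI2 : Complex.I ^ 2 = -1 := Complex.I_sq
    have hI4 : Complex.I ^ 4 = 1 := by rw [show (4:ℕ)=2*2 from rfl, pow_mul, hI2]; ring
    ring_nf
    simp only [h2, h4, hI2, hI4]
    ring

/-- For `Ψ ∈ ℂ³` with spin vector `F` computed from `Ψ`,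
`S = F_x f_x + F_y f_y + F_z f_z` with `|F| ≠ 0`, one has `S²Ψ = |F|²Ψ` and
`exp(−i β₁ t S) Ψ = cos(β₁ t |F|) Ψ − i (sin(β₁ t |F|)/|F|) SΨ`. -/
theorem spin1_matrix_exponential (Ψ : Fin 3 → ℂ)
    (Fx Fy Fz : ℂ) (hFx : Fx = Fcomp fx Ψ) (hFy : Fy = Fcomp fy Ψ)
    (hFz : Fz = Fcomp fz Ψ)
    (nF : ℝ) (hnF : nF = Real.sqrt (‖Fx‖ ^ 2 + ‖Fy‖ ^ 2 + ‖Fz‖ ^ 2))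
    (hne : nF ≠ 0)
    (S : Matrix (Fin 3) (Fin 3) ℂ) (hS : S = Fx • fx + Fy • fy + Fz • fz) :
    S.mulVec (S.mulVec Ψ) = ((nF : ℂ) ^ 2) • Ψ ∧
    ∀ t β₁ : ℝ,
      (NormedSpace.exp ((-Complex.I * (β₁ : ℂ) * (t : ℂ)) • S)).mulVec Ψ =
        ((Real.cos (β₁ * t * nF) : ℂ)) • Ψ
          - (Complex.I * (Real.sin (β₁ * t * nF) : ℂ) / (nF : ℂ)) •
            S.mulVec Ψ := by
  have hn2c : ((nF : ℂ)) ^ 2 =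
      Fx * (starRingEnd ℂ) Fx + Fy * (starRingEnd ℂ) Fy + Fz * (starRingEnd ℂ) Fz := by
    have h0 : (0:ℝ) ≤ ‖Fx‖ ^ 2 + ‖Fy‖ ^ 2 + ‖Fz‖ ^ 2 := by positivity
    have habs : ∀ z : ℂ, ((‖z‖ ^ 2 : ℝ) : ℂ) = z * (starRingEnd ℂ) z := by
      intro z
      rw [Complex.mul_conj]
      norm_cast
      rw [Complex.normSq_eq_norm_sq]
    rw [hnF, ← Complex.ofReal_pow, Real.sq_sqrt h0]
    push_cast
    rw [← habs Fx, ← habs Fy, ← habs Fz]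
    push_cast
    ring
  have part1 : S.mulVec (S.mulVec Ψ) = ((nF : ℂ) ^ 2) • Ψ := by
    rw [hn2c]
    exact spin1_key Ψ Fx Fy Fz hFx hFy hFz S hS
  refine ⟨part1, fun t β₁ => ?_⟩
  have hnne : (nF : ℂ) ≠ 0 := Complex.ofReal_ne_zero.mpr hne
  set n : ℂ := (nF : ℂ) with hn
  set w : Fin 3 → ℂ := S.mulVec Ψ with hw
  set c : ℂ := -Complex.I * (β₁ : ℂ) * (t : ℂ) with hc
  set θ : ℝ := β₁ * t * nF with hθ
  clear_value n w c θ
  have hp : (c • S).mulVec ((2:ℂ)⁻¹ • (Ψ + n⁻¹ • w)) =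
      (c * n) • ((2:ℂ)⁻¹ • (Ψ + n⁻¹ • w)) := by
    rw [Matrix.smul_mulVec, Matrix.mulVec_smul, Matrix.mulVec_add, Matrix.mulVec_smul,
      ← hw, part1]
    match_scalars <;> field_simp <;> ring
  have hm : (c • S).mulVec ((2:ℂ)⁻¹ • (Ψ - n⁻¹ • w)) =
      (-(c * n)) • ((2:ℂ)⁻¹ • (Ψ - n⁻¹ • w)) := by
    rw [Matrix.smul_mulVec, Matrix.mulVec_smul, Matrix.mulVec_sub, Matrix.mulVec_smul,
      ← hw, part1]
    match_scalars <;> field_simp <;> ring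
  have he1 : Complex.exp (c * n) = ((Real.cos θ : ℝ) : ℂ) - ((Real.sin θ : ℝ) : ℂ) * Complex.I := by
    have : c * n = ((-θ : ℝ) : ℂ) * Complex.I := by
      rw [hc, hn, hθ]; push_cast; ring
    rw [this, Complex.exp_mul_I]
    push_cast
    rw [Complex.cos_neg, Complex.sin_neg, ← Complex.ofReal_cos, ← Complex.ofReal_sin]
    ring
  have he2 : Complex.exp (-(c * n)) =
      ((Real.cos θ : ℝ) : ℂ) + ((Real.sin θ : ℝ) : ℂ) * Complex.I := by
    have : -(c * n) = ((θ : ℝ) : ℂ) * Complex.I := by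
      rw [hc, hn, hθ]; push_cast; ring
    rw [this, Complex.exp_mul_I, ← Complex.ofReal_cos, ← Complex.ofReal_sin]
  calc (NormedSpace.exp (c • S)).mulVec Ψ
      = (NormedSpace.exp (c • S)).mulVec ((2:ℂ)⁻¹ • (Ψ + n⁻¹ • w))
        + (NormedSpace.exp (c • S)).mulVec ((2:ℂ)⁻¹ • (Ψ - n⁻¹ • w)) := by
        have hsplit : Ψ = (2:ℂ)⁻¹ • (Ψ + n⁻¹ • w) + (2:ℂ)⁻¹ • (Ψ - n⁻¹ • w) := by module
        conv_lhs => rw [hsplit]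
        rw [Matrix.mulVec_add]
    _ = Complex.exp (c * n) • ((2:ℂ)⁻¹ • (Ψ + n⁻¹ • w))
        + Complex.exp (-(c * n)) • ((2:ℂ)⁻¹ • (Ψ - n⁻¹ • w)) := by
        rw [exp_mulVec_eig _ _ _ hp, exp_mulVec_eig _ _ _ hm]
    _ = ((Real.cos θ : ℝ) : ℂ) • Ψ - (Complex.I * ((Real.sin θ : ℝ) : ℂ) / n) • w := by
        rw [he1, he2]
        match_scalars <;> field_simp <;> ring
end
end

section
/- Let Ψ : [t_n, t_{n+1}] → ℂ³ solve i∂_t Ψ = [V + β₀|Ψ|² + β₁(F_x(Ψ)f_x + F_y(Ψ)f_y + F_z(Ψ)f_z)]Ψ with V, β₀, β₁ real constants and f_α the spin-1 matrices, F_α(Ψ) = Ψ* f_α Ψ. Then both the total density |Ψ(t)|² and each spin-vector component F_α(Ψ(t)) (α = x,y,z) are constant in t on [t_n, t_{n+1}]. -/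
open Matrix Complex Set

noncomputable section

/-- Total density `|Ψ|² = Ψ*Ψ`. -/
def rho (Ψ : Fin 3 → ℂ) : ℝ := ∑ i, ‖Ψ i‖ ^ 2

lemma sq2 : ((Real.sqrt 2 : ℝ) : ℂ) ^ 2 = 2 := by
  rw [← Complex.ofReal_pow, Real.sq_sqrt (by norm_num : (0:ℝ) ≤ 2)]; norm_num

lemma sq2' : ((Real.sqrt 2 : ℝ) : ℂ) ^ 4 = 4 := by
  have h : ((Real.sqrt 2 : ℝ) : ℂ) ^ 4 = (((Real.sqrt 2 : ℝ) : ℂ) ^ 2) ^ 2 := by ring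
  rw [h, sq2]; norm_num

lemma fx_herm : fxᴴ = fx := by
  ext i j; fin_cases i <;> fin_cases j <;>
    simp [fx, conjTranspose_apply, Matrix.vecHead, Matrix.vecTail]

lemma fy_herm : fyᴴ = fy := by
  ext i j; fin_cases i <;> fin_cases j <;>
    simp [fy, conjTranspose_apply, Matrix.vecHead, Matrix.vecTail] <;> ring

lemma fz_herm : fzᴴ = fz := by
  ext i j; fin_cases i <;> fin_cases j <;>
    simp [fz, conjTranspose_apply, Matrix.vecHead, Matrix.vecTail]

lemma comm_xy : fx * fy - fy * fx = Complex.I • fz := by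
  ext i j; fin_cases i <;> fin_cases j <;>
    simp [fx, fy, fz, Matrix.mul_apply, Fin.sum_univ_three, Matrix.vecHead, Matrix.vecTail] <;>
    field_simp <;> ring_nf <;> simp [sq2, sq2'] <;> ring_nf <;> norm_num

lemma comm_yz : fy * fz - fz * fy = Complex.I • fx := by
  ext i j; fin_cases i <;> fin_cases j <;>
    simp [fx, fy, fz, Matrix.mul_apply, Fin.sum_univ_three, Matrix.vecHead, Matrix.vecTail] <;>
    field_simp <;> ring_nf <;> simp [sq2, sq2'] <;> ring_nf <;> norm_num

lemma comm_zx : fz * fx - fx * fz = Complex.I • fy := by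
  ext i j; fin_cases i <;> fin_cases j <;>
    simp [fx, fy, fz, Matrix.mul_apply, Fin.sum_univ_three, Matrix.vecHead, Matrix.vecTail] <;>
    field_simp <;> ring_nf <;> simp [sq2, sq2'] <;> ring_nf <;> norm_num

lemma Fcomp_real (A : Matrix (Fin 3) (Fin 3) ℂ) (hA : Aᴴ = A) (v : Fin 3 → ℂ) :
    (starRingEnd ℂ) (Fcomp A v) = Fcomp A v := by
  have h : ∀ i j, (starRingEnd ℂ) (A i j) = A j i := by
    intro i j; conv_rhs => rw [← hA]
    simp [conjTranspose_apply]
  simp only [Fcomp, dotProduct, Matrix.mulVec, Finset.mul_sum, map_sum, _root_.map_mul]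
  rw [Finset.sum_comm]
  refine Finset.sum_congr rfl fun i _ => Finset.sum_congr rfl fun j _ => ?_
  simp [h]; ring

lemma rho_eq (v : Fin 3 → ℂ) : ((rho v : ℝ) : ℂ) = Fcomp 1 v := by
  have h : ∀ z : ℂ, ((‖z‖ : ℝ) : ℂ) ^ 2 = star z * z := by
    intro z; rw [Complex.star_def, Complex.conj_mul']
  simp only [rho, Fcomp, dotProduct, Matrix.one_mulVec, Fin.sum_univ_three, Complex.ofReal_add,
    Complex.ofReal_pow, Pi.star_apply, h]

lemma hasDerivAt_Fcomp (A : Matrix (Fin 3) (Fin 3) ℂ) (f : ℝ → Fin 3 → ℂ) (D : Fin 3 → ℂ)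
    (t : ℝ) (hf : ∀ j, HasDerivAt (fun s => f s j) (D j) t) :
    HasDerivAt (fun s => Fcomp A (f s))
      (dotProduct (star D) (A.mulVec (f t)) + dotProduct (star (f t)) (A.mulVec D)) t := by
  have h1 : HasDerivAt (fun s => ∑ i, ∑ j, star (f s i) * (A i j * f s j))
      (∑ i, ∑ j, (star (D i) * (A i j * f t j) + star (f t i) * (A i j * D j))) t :=
    HasDerivAt.fun_sum fun i _ => HasDerivAt.fun_sum fun j _ =>
      ((hf i).star).mul ((hf j).const_mul (A i j))
  have e1 : (fun s => Fcomp A (f s)) = fun s => ∑ i, ∑ j, star (f s i) * (A i j * f s j) := by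
    funext s; simp [Fcomp, dotProduct, Matrix.mulVec, Finset.mul_sum]
  have e2 : dotProduct (star D) (A.mulVec (f t)) + dotProduct (star (f t)) (A.mulVec D)
      = ∑ i, ∑ j, (star (D i) * (A i j * f t j) + star (f t i) * (A i j * D j)) := by
    simp [dotProduct, Matrix.mulVec, Finset.mul_sum, Finset.sum_add_distrib]
  rw [e1, e2]; exact h1

lemma scxy (v : Fin 3 → ℂ) :
    star v ⬝ᵥ ((fx * fy) *ᵥ v) - star v ⬝ᵥ ((fy * fx) *ᵥ v) = Complex.I * Fcomp fz v := by
  have h := congrArg (fun B : Matrix (Fin 3) (Fin 3) ℂ => star v ⬝ᵥ (B *ᵥ v)) comm_xy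
  simpa [Matrix.sub_mulVec, Matrix.smul_mulVec, dotProduct_sub, dotProduct_smul,
    smul_eq_mul, Fcomp] using h

lemma scyz (v : Fin 3 → ℂ) :
    star v ⬝ᵥ ((fy * fz) *ᵥ v) - star v ⬝ᵥ ((fz * fy) *ᵥ v) = Complex.I * Fcomp fx v := by
  have h := congrArg (fun B : Matrix (Fin 3) (Fin 3) ℂ => star v ⬝ᵥ (B *ᵥ v)) comm_yz
  simpa [Matrix.sub_mulVec, Matrix.smul_mulVec, dotProduct_sub, dotProduct_smul,
    smul_eq_mul, Fcomp] using h

lemma sczx (v : Fin 3 → ℂ) :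
    star v ⬝ᵥ ((fz * fx) *ᵥ v) - star v ⬝ᵥ ((fx * fz) *ᵥ v) = Complex.I * Fcomp fy v := by
  have h := congrArg (fun B : Matrix (Fin 3) (Fin 3) ℂ => star v ⬝ᵥ (B *ᵥ v)) comm_zx
  simpa [Matrix.sub_mulVec, Matrix.smul_mulVec, dotProduct_sub, dotProduct_smul,
    smul_eq_mul, Fcomp] using h

/-- If `Ψ : [t_n,t_{n+1}] → ℂ³` solves
`i∂_t Ψ = [V + β₀|Ψ|² + β₁ F(Ψ)·f]Ψ`, then the total density `|Ψ(t)|²` and each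
spin-vector component `F_α(Ψ(t))` are constant in `t` on `[t_n, t_{n+1}]`. -/
theorem spin1_nonlinear_step_invariants (V β0 β1 tn tn1 : ℝ) (htn : tn ≤ tn1)
    (Ψ : ℝ → Fin 3 → ℂ)
    (hode : ∀ t ∈ Icc tn tn1, ∀ j,
      HasDerivAt (fun s => Ψ s j)
        (-Complex.I *
          ((((V : ℂ) + (β0 : ℂ) * (rho (Ψ t) : ℝ)) • Ψ t) j
            + (β1 : ℂ) *
              ((Fcomp fx (Ψ t) • fx + Fcomp fy (Ψ t) • fy
                + Fcomp fz (Ψ t) • fz).mulVec (Ψ t)) j)) t) :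
    ∀ t ∈ Icc tn tn1,
      rho (Ψ t) = rho (Ψ tn) ∧
      Fcomp fx (Ψ t) = Fcomp fx (Ψ tn) ∧
      Fcomp fy (Ψ t) = Fcomp fy (Ψ tn) ∧
      Fcomp fz (Ψ t) = Fcomp fz (Ψ tn) := by
  have key : ∀ A : Matrix (Fin 3) (Fin 3) ℂ, Aᴴ = A →
      (∀ v : Fin 3 → ℂ,
        star v ⬝ᵥ
          (((Fcomp fx v • fx + Fcomp fy v • fy + Fcomp fz v • fz) * A
            - A * (Fcomp fx v • fx + Fcomp fy v • fy + Fcomp fz v • fz)) *ᵥ v) = 0) →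
      ∀ t ∈ Icc tn tn1, Fcomp A (Ψ t) = Fcomp A (Ψ tn) := by
    intro A hA hcomm
    have hd : ∀ t ∈ Icc tn tn1, HasDerivAt (fun s => Fcomp A (Ψ s)) 0 t := by
      intro t ht
      set a : Fin 3 → ℂ := Ψ t with ha
      set M : Matrix (Fin 3) (Fin 3) ℂ :=
        Fcomp fx a • fx + Fcomp fy a • fy + Fcomp fz a • fz with hM
      set H : Matrix (Fin 3) (Fin 3) ℂ :=
        ((V : ℂ) + (β0 : ℂ) * ((rho a : ℝ) : ℂ)) • 1 + (β1 : ℂ) • M with hH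
      set D : Fin 3 → ℂ := (-Complex.I) • (H *ᵥ a) with hD
      have hf : ∀ j, HasDerivAt (fun s => Ψ s j) (D j) t := by
        intro j
        have h0 := hode t ht j
        convert h0 using 1
        simp [hD, hH, hM, ha, Matrix.add_mulVec, Matrix.smul_mulVec, Matrix.one_mulVec]
        ring
      have h2 := hasDerivAt_Fcomp A Ψ D t hf
      have hHherm : Hᴴ = H := by
        rw [hH]
        rw [conjTranspose_add, conjTranspose_smul, conjTranspose_smul, conjTranspose_one, hM,
          conjTranspose_add, conjTranspose_add, conjTranspose_smul, conjTranspose_smul,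
          conjTranspose_smul, fx_herm, fy_herm, fz_herm]
        simp [Complex.star_def, Fcomp_real fx fx_herm, Fcomp_real fy fy_herm,
          Fcomp_real fz fz_herm, Complex.conj_ofReal]
      have hval : star D ⬝ᵥ A *ᵥ (Ψ t) + star (Ψ t) ⬝ᵥ A *ᵥ D = 0 := by
        rw [← ha]
        have e1 : star D = Complex.I • (star a ᵥ* H) := by
          rw [hD, star_smul, star_mulVec, hHherm]
          simp
        have e2 : star a ⬝ᵥ A *ᵥ D = (-Complex.I) * (star a ⬝ᵥ (A * H) *ᵥ a) := by
          rw [hD, Matrix.mulVec_smul, dotProduct_smul, smul_eq_mul, ← Matrix.mulVec_mulVec,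
            Matrix.mulVec_mulVec]
        have e3 : star D ⬝ᵥ A *ᵥ a = Complex.I * (star a ⬝ᵥ (H * A) *ᵥ a) := by
          rw [e1, smul_dotProduct, smul_eq_mul, Matrix.dotProduct_mulVec,
            Matrix.vecMul_vecMul, ← Matrix.dotProduct_mulVec]
        rw [e2, e3]
        have e4 : H * A - A * H = (β1 : ℂ) • (M * A - A * M) := by
          rw [hH]
          simp only [Matrix.add_mul, Matrix.mul_add, Matrix.smul_mul, Matrix.mul_smul,
            Matrix.one_mul, Matrix.mul_one, smul_sub]
          abel
        have e5 : star a ⬝ᵥ (H * A) *ᵥ a - star a ⬝ᵥ (A * H) *ᵥ a = 0 := by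
          rw [← dotProduct_sub, ← Matrix.sub_mulVec, e4, Matrix.smul_mulVec,
            dotProduct_smul, hM, hcomm a, smul_zero]
        linear_combination Complex.I * e5
      rw [hval] at h2
      exact h2
    have hcont : ContinuousOn (fun s => Fcomp A (Ψ s)) (Icc tn tn1) :=
      fun t ht => (hd t ht).continuousAt.continuousWithinAt
    exact constant_of_has_deriv_right_zero hcont
      (fun t ht => (hd t (Ico_subset_Icc_self ht)).hasDerivWithinAt)
  have h1A : (1 : Matrix (Fin 3) (Fin 3) ℂ)ᴴ = 1 := conjTranspose_one
  have hc1 : ∀ v : Fin 3 → ℂ,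
      star v ⬝ᵥ
        (((Fcomp fx v • fx + Fcomp fy v • fy + Fcomp fz v • fz) * 1
          - 1 * (Fcomp fx v • fx + Fcomp fy v • fy + Fcomp fz v • fz)) *ᵥ v) = 0 := by
    intro v; simp
  have hcx : ∀ v : Fin 3 → ℂ,
      star v ⬝ᵥ
        (((Fcomp fx v • fx + Fcomp fy v • fy + Fcomp fz v • fz) * fx
          - fx * (Fcomp fx v • fx + Fcomp fy v • fy + Fcomp fz v • fz)) *ᵥ v) = 0 := by
    intro v
    simp only [Matrix.add_mul, Matrix.mul_add, Matrix.smul_mul, Matrix.mul_smul,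
      Matrix.sub_mulVec, Matrix.add_mulVec, Matrix.smul_mulVec, dotProduct_sub,
      dotProduct_add, dotProduct_smul, smul_eq_mul]
    linear_combination (-(Fcomp fy v)) * scxy v + (Fcomp fz v) * sczx v
  have hcy : ∀ v : Fin 3 → ℂ,
      star v ⬝ᵥ
        (((Fcomp fx v • fx + Fcomp fy v • fy + Fcomp fz v • fz) * fy
          - fy * (Fcomp fx v • fx + Fcomp fy v • fy + Fcomp fz v • fz)) *ᵥ v) = 0 := by
    intro v
    simp only [Matrix.add_mul, Matrix.mul_add, Matrix.smul_mul, Matrix.mul_smul,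
      Matrix.sub_mulVec, Matrix.add_mulVec, Matrix.smul_mulVec, dotProduct_sub,
      dotProduct_add, dotProduct_smul, smul_eq_mul]
    linear_combination (Fcomp fx v) * scxy v + (-(Fcomp fz v)) * scyz v
  have hcz : ∀ v : Fin 3 → ℂ,
      star v ⬝ᵥ
        (((Fcomp fx v • fx + Fcomp fy v • fy + Fcomp fz v • fz) * fz
          - fz * (Fcomp fx v • fx + Fcomp fy v • fy + Fcomp fz v • fz)) *ᵥ v) = 0 := by
    intro v
    simp only [Matrix.add_mul, Matrix.mul_add, Matrix.smul_mul, Matrix.mul_smul,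
      Matrix.sub_mulVec, Matrix.add_mulVec, Matrix.smul_mulVec, dotProduct_sub,
      dotProduct_add, dotProduct_smul, smul_eq_mul]
    linear_combination (-(Fcomp fx v)) * sczx v + (Fcomp fy v) * scyz v
  intro t ht
  refine ⟨?_, key fx fx_herm hcx t ht, key fy fy_herm hcy t ht, key fz fz_herm hcz t ht⟩
  have h := (rho_eq (Ψ t)).trans ((key 1 h1A hc1 t ht).trans (rho_eq (Ψ tn)).symm)
  exact_mod_cast h
end
end

section
/- Given M ∈ (−1,1) and positive real numbers a = ‖φ₁‖², b = ‖φ₀‖², c = ‖φ₋₁‖² (with b > 0), the system σ₁² a + σ₀² b + σ₋₁² c = 1, σ₁² a − σ₋₁² c = M, σ₁ σ₋₁ = σ₀², in unknowns σ₁, σ₀, σ₋₁ > 0, has the explicit solution σ₀² = (1−M²) / (b + √(4(1−M²) a c + M² b²)), σ₁² = (1 + M − σ₀² b)/(2a), σ₋₁² = (1 − M − σ₀² b)/(2c), and these values are positive. -/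
/-- Explicit positive solution of the spin-1 projection-constant system:
given `M ∈ (−1,1)` and `a, b, c > 0`, the values
`σ₀² = (1−M²)/(b + √(4(1−M²)ac + M²b²))`, `σ₁² = (1+M−σ₀²b)/(2a)`,
`σ₋₁² = (1−M−σ₀²b)/(2c)` are positive and satisfy
`σ₁²a + σ₀²b + σ₋₁²c = 1`, `σ₁²a − σ₋₁²c = M`, `σ₁²σ₋₁² = (σ₀²)²`. -/
theorem spin1_projection_constants (M a b c : ℝ)
    (hM : -1 < M ∧ M < 1) (ha : 0 < a) (hb : 0 < b) (hc : 0 < c)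
    (σ0sq σ1sq σm1sq : ℝ)
    (h0 : σ0sq = (1 - M ^ 2) /
      (b + Real.sqrt (4 * (1 - M ^ 2) * a * c + M ^ 2 * b ^ 2)))
    (h1 : σ1sq = (1 + M - σ0sq * b) / (2 * a))
    (hm1 : σm1sq = (1 - M - σ0sq * b) / (2 * c)) :
    0 < σ0sq ∧ 0 < σ1sq ∧ 0 < σm1sq ∧
    σ1sq * a + σ0sq * b + σm1sq * c = 1 ∧
    σ1sq * a - σm1sq * c = M ∧
    σ1sq * σm1sq = σ0sq ^ 2 := by
  obtain ⟨hM1, hM2⟩ := hM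
  have hM2' : M ^ 2 < 1 := by nlinarith
  set D : ℝ := 4 * (1 - M ^ 2) * a * c + M ^ 2 * b ^ 2 with hD
  have hD0 : 0 ≤ D := by nlinarith [mul_pos ha hc, sq_nonneg (M*b)]
  set S : ℝ := Real.sqrt D with hSdef
  have hS2 : S ^ 2 = D := Real.sq_sqrt hD0
  have hS0 : 0 ≤ S := Real.sqrt_nonneg _
  have hMbS : |M| * b < S := by
    have h1 : (|M| * b) ^ 2 < D := by
      have : M ^ 2 = |M| ^ 2 := (sq_abs M).symm
      nlinarith [mul_pos ha hc]
    nlinarith [abs_nonneg M, mul_nonneg (abs_nonneg M) hb.le]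
  have hbS : 0 < b + S := by linarith
  have hMb1 : -M * b ≤ |M| * b := by
    have := neg_abs_le M
    nlinarith
  have hMb2 : M * b ≤ |M| * b := by
    have := le_abs_self M
    nlinarith
  have h0pos : 0 < σ0sq := by
    rw [h0]; exact div_pos (by nlinarith) hbS
  have h1pos : 0 < σ1sq := by
    rw [h1]
    apply div_pos _ (by linarith)
    rw [h0]
    rw [sub_pos, div_mul_eq_mul_div, div_lt_iff₀ hbS]
    nlinarith
  have hm1pos : 0 < σm1sq := by
    rw [hm1]
    apply div_pos _ (by linarith)
    rw [h0]
    rw [sub_pos, div_mul_eq_mul_div, div_lt_iff₀ hbS]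
    nlinarith
  refine ⟨h0pos, h1pos, hm1pos, ?_, ?_, ?_⟩
  · rw [h1, hm1]; field_simp; ring
  · rw [h1, hm1]; field_simp; ring
  · have hS2' : S ^ 2 = 4 * (1 - M ^ 2) * a * c + M ^ 2 * b ^ 2 := hS2.trans hD
    rw [h1, hm1, h0]
    field_simp
    ring_nf
    linear_combination (1 - M ^ 2) * hS2'
end
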